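/- arXiv:2309.04789 — 6 statements merged into one kernel-verified Lean document; each statement's English description precedes it below -/
import Mathlib

section
/- Let T be a clique-tree of a connected chordal graph G and let b, b' be adjacent bags of T. Then M_b ∩ M_{b'} is nonempty. -/
/-- adjacent bags of a clique-tree of a connected chordal graph
have nonempty intersection. -/
theorem stmt4 {V B : Type*} (G : SimpleGraph V) (T : SimpleGraph B) (M : B → Set V)
    (hG : G.Connected) (hT : T.IsTree) (hMinj : Function.Injective M)
    (hmax : ∀ b, G.IsClique (M b) ∧ ∀ S : Set V, G.IsClique S → M b ⊆ S → S = M b)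
    (hvert : ∀ u : V, ∃ b, u ∈ M b)
    (hedge : ∀ u w : V, G.Adj u w → ∃ b, u ∈ M b ∧ w ∈ M b)
    (hsub : ∀ u : V, (T.induce {b | u ∈ M b}).Connected)
    (b b' : B) (hadj : T.Adj b b') :
    (M b ∩ M b').Nonempty := by
  by_contra hne
  rw [Set.not_nonempty_iff_eq_empty] at hne
  -- every bag is nonempty
  have hbag : ∀ c : B, (M c).Nonempty := by
    intro c
    by_contra hc
    rw [Set.not_nonempty_iff_eq_empty] at hc
    obtain ⟨u⟩ := hG.nonempty
    have := (hmax c).2 {u} (G.isClique_singleton u) (by simp [hc])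
    simp [← this] at hc
  set T' : SimpleGraph B := T \ SimpleGraph.fromEdgeSet {s(b, b')} with hT'
  -- the edge bb' is a bridge of the tree T
  have hbridge : ¬ T'.Reachable b b' := by
    have := (SimpleGraph.isAcyclic_iff_forall_adj_isBridge.mp hT.IsAcyclic) hadj
    exact SimpleGraph.isBridge_iff.mp this
  -- any two bags containing the same vertex are T'-reachable
  have hkey : ∀ (v : V) (c c' : B), v ∈ M c → v ∈ M c' → T'.Reachable c c' := by
    intro v c c' hc hc'
    have hconn := hsub v
    have hr : (T.induce {x | v ∈ M x}).Reachable ⟨c, hc⟩ ⟨c', hc'⟩ := hconn ⟨c, hc⟩ ⟨c', hc'⟩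
    have hA : ∀ x y : B, v ∈ M x → v ∈ M y → T.Adj x y → T'.Adj x y := by
      intro x y hx hy hxy'
      refine ⟨hxy', ?_⟩
      simp only [SimpleGraph.fromEdgeSet_adj, Set.mem_singleton_iff, not_and, not_ne_iff]
      intro hmem
      exfalso
      rcases Sym2.eq_iff.mp hmem with ⟨h1, h2⟩ | ⟨h1, h2⟩
      · rw [h1] at hx; rw [h2] at hy
        have : v ∈ M b ∩ M b' := ⟨hx, hy⟩
        simp [hne] at this
      · rw [h1] at hx; rw [h2] at hy
        have : v ∈ M b ∩ M b' := ⟨hy, hx⟩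
        simp [hne] at this
    exact hr.map ⟨Subtype.val, fun {x y} h => hA x.val y.val x.2 y.2 h⟩
  have step : ∀ x y : V, G.Adj x y → (∃ c, x ∈ M c ∧ T'.Reachable c b) →
      (∃ c, y ∈ M c ∧ T'.Reachable c b) := by
    rintro x y hxy ⟨c, hxc, hrc⟩
    obtain ⟨d, hxd, hyd⟩ := hedge x y hxy
    exact ⟨d, hyd, (hkey x d c hxd hxc).trans hrc⟩
  have hP : ∀ u w : V, G.Reachable u w → (∃ c, u ∈ M c ∧ T'.Reachable c b) →
      (∃ c, w ∈ M c ∧ T'.Reachable c b) := by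
    intro u w hr
    obtain ⟨p⟩ := hr
    induction p with
    | nil => exact id
    | cons h p ih => exact fun hx => ih (step _ _ h hx)
  obtain ⟨u, hu⟩ := hbag b
  obtain ⟨w, hw⟩ := hbag b'
  obtain ⟨c, hwc, hrc⟩ := hP u w (hG u w) ⟨b, hu, SimpleGraph.Reachable.refl b⟩
  exact hbridge ((hkey w b' c hw hwc).trans hrc).symm
end

section
/- Let G = (V,E) be a trapezoid graph with a proper trapezoid model {T_v}_{v∈V}, where T_v is determined by vertices t_1(v) < t_2(v) on the top line and b_1(v) < b_2(v) on the bottom line, all 4n endpoint labels on each line being distinct elements of [2n], and u v ∈ E iff T_u ∩ T_v ≠ ∅ iff ¬(t_2(u) < t_1(v) ∧ b_2(u) < b_1(v)) ∧ ¬(t_2(v) < t_1(u) ∧ b_2(v) < b_1(u)). Define f_t(v) = |{i < t_1(v) : i ∈ {t_1(w), t_2(w)} for some w ∉ N(v) ∪ {v}}| and f_b(v) analogously on the bottom line. Then f_t(v) = f_b(v) for every v ∈ V. -/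
/-- in a proper trapezoid model, f_t(v) = f_b(v) for every v. -/
theorem stmt6 {V : Type*} [Fintype V] {n : ℕ} (hn : Fintype.card V = n)
    (G : SimpleGraph V) (t1 t2 b1 b2 : V → ℕ)
    (ht : ∀ x, t1 x < t2 x) (hb : ∀ x, b1 x < b2 x)
    (htop : ∀ i, 1 ≤ i → i ≤ 2 * n →
      ∃! p : V × Bool, (if p.2 then t2 p.1 else t1 p.1) = i)
    (hbot : ∀ i, 1 ≤ i → i ≤ 2 * n →
      ∃! p : V × Bool, (if p.2 then b2 p.1 else b1 p.1) = i)
    (htb : ∀ x, 1 ≤ t1 x ∧ t2 x ≤ 2 * n)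
    (hbb : ∀ x, 1 ≤ b1 x ∧ b2 x ≤ 2 * n)
    (hadj : ∀ u v, u ≠ v → (G.Adj u v ↔
      ¬(t2 u < t1 v ∧ b2 u < b1 v) ∧ ¬(t2 v < t1 u ∧ b2 v < b1 u))) :
    ∀ v : V,
      {i : ℕ | i < t1 v ∧ ∃ w : V, w ≠ v ∧ ¬ G.Adj v w ∧ (t1 w = i ∨ t2 w = i)}.ncard =
      {i : ℕ | i < b1 v ∧ ∃ w : V, w ≠ v ∧ ¬ G.Adj v w ∧ (b1 w = i ∨ b2 w = i)}.ncard := by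
  intro v
  set eT : V × Bool → ℕ := fun p => if p.2 then t2 p.1 else t1 p.1 with heT
  set eB : V × Bool → ℕ := fun p => if p.2 then b2 p.1 else b1 p.1 with heB
  have hTrange : ∀ p : V × Bool, 1 ≤ eT p ∧ eT p ≤ 2 * n := by
    rintro ⟨w, _ | _⟩
    · exact ⟨(htb w).1, le_of_lt (lt_of_lt_of_le (ht w) (htb w).2)⟩
    · exact ⟨le_of_lt (lt_of_le_of_lt (htb w).1 (ht w)), (htb w).2⟩
  have hBrange : ∀ p : V × Bool, 1 ≤ eB p ∧ eB p ≤ 2 * n := by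
    rintro ⟨w, _ | _⟩
    · exact ⟨(hbb w).1, le_of_lt (lt_of_lt_of_le (hb w) (hbb w).2)⟩
    · exact ⟨le_of_lt (lt_of_le_of_lt (hbb w).1 (hb w)), (hbb w).2⟩
  have hTinj : Function.Injective eT := by
    intro p q h
    exact (htop (eT p) (hTrange p).1 (hTrange p).2).unique rfl h.symm
  have hBinj : Function.Injective eB := by
    intro p q h
    exact (hbot (eB p) (hBrange p).1 (hBrange p).2).unique rfl h.symm
  set S : Set (V × Bool) := {p | t2 p.1 < t1 v ∧ b2 p.1 < b1 v} with hS
  have key : ∀ w, w ≠ v → ¬ G.Adj v w →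
      (t2 w < t1 v ∧ b2 w < b1 v) ∨ (t2 v < t1 w ∧ b2 v < b1 w) := by
    intro w hw hna
    by_contra hc
    push_neg at hc
    exact hna ((hadj v w (Ne.symm hw)).2 ⟨fun h => absurd h.2 (not_lt.2 (hc.2 h.1)),
      fun h => absurd h.2 (not_lt.2 (hc.1 h.1))⟩)
  have keyrev : ∀ w, t2 w < t1 v ∧ b2 w < b1 v → w ≠ v ∧ ¬ G.Adj v w := by
    intro w hleft
    have hne : w ≠ v := fun h => absurd hleft.1 (by rw [h]; exact not_lt.2 (le_of_lt (ht v)))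
    refine ⟨hne, fun hadjvw => ?_⟩
    exact ((hadj v w (Ne.symm hne)).1 hadjvw).2 hleft
  have hTop : {i : ℕ | i < t1 v ∧ ∃ w : V, w ≠ v ∧ ¬ G.Adj v w ∧ (t1 w = i ∨ t2 w = i)}
      = eT '' S := by
    ext i
    constructor
    · rintro ⟨hi, w, hw, hna, hor⟩
      rcases key w hw hna with hleft | hright
      · rcases hor with h | h
        · exact ⟨(w, false), hleft, h⟩
        · exact ⟨(w, true), hleft, h⟩
      · exfalso
        rcases hor with h | h
        · exact absurd hi (not_lt.2 (le_of_lt (lt_trans (ht v) (h ▸ hright.1))))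
        · exact absurd hi (not_lt.2 (le_of_lt (lt_trans (lt_trans (ht v) hright.1)
            (h ▸ ht w))))
    · rintro ⟨⟨w, bo⟩, ⟨h1, h2⟩, rfl⟩
      obtain ⟨hne, hna⟩ := keyrev w ⟨h1, h2⟩
      cases bo
      · exact ⟨lt_trans (ht w) h1, w, hne, hna, Or.inl rfl⟩
      · exact ⟨h1, w, hne, hna, Or.inr rfl⟩
  have hBot : {i : ℕ | i < b1 v ∧ ∃ w : V, w ≠ v ∧ ¬ G.Adj v w ∧ (b1 w = i ∨ b2 w = i)}
      = eB '' S := by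
    ext i
    constructor
    · rintro ⟨hi, w, hw, hna, hor⟩
      rcases key w hw hna with hleft | hright
      · rcases hor with h | h
        · exact ⟨(w, false), hleft, h⟩
        · exact ⟨(w, true), hleft, h⟩
      · exfalso
        rcases hor with h | h
        · exact absurd hi (not_lt.2 (le_of_lt (lt_trans (hb v) (h ▸ hright.2))))
        · exact absurd hi (not_lt.2 (le_of_lt (lt_trans (lt_trans (hb v) hright.2)
            (h ▸ hb w))))
    · rintro ⟨⟨w, bo⟩, ⟨h1, h2⟩, rfl⟩
      obtain ⟨hne, hna⟩ := keyrev w ⟨h1, h2⟩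
      cases bo
      · exact ⟨lt_trans (hb w) h2, w, hne, hna, Or.inl rfl⟩
      · exact ⟨h2, w, hne, hna, Or.inr rfl⟩
  rw [hTop, hBot, Set.ncard_image_of_injective S hTinj,
    Set.ncard_image_of_injective S hBinj]
end

section
/- Let G = (V,E) be a graph with a semi-proper trapezoid model {T_v} (endpoints t_1(v) < t_2(v), b_1(v) < b_2(v) in [2n], all endpoints distinct on each line; every edge u v ∈ E has T_u ∩ T_v ≠ ∅). Suppose that (1) for every v, every integer in [t_1(v), t_2(v)] on the top line and every integer in [b_1(v), b_2(v)] on the bottom line is an endpoint of v or of a neighbor of v, and (2) f_t(v) = f_b(v) for every v, where f_t(v) counts endpoints of non-neighbors strictly left of t_1(v) on the top line and f_b(v) analogously. Then the model is a proper trapezoid model, i.e., non-adjacent vertices have disjoint trapezoids, so G is a trapezoid graph. -/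
/-- a semi-proper trapezoid model satisfying conditions (1) and
(2) is a proper trapezoid model: non-adjacent vertices have disjoint
trapezoids. -/
theorem stmt7 {V : Type*} [Fintype V] {n : ℕ} (hn : Fintype.card V = n)
    (G : SimpleGraph V) (t1 t2 b1 b2 : V → ℕ)
    (ht : ∀ x, t1 x < t2 x) (hb : ∀ x, b1 x < b2 x)
    (htop : ∀ i, 1 ≤ i → i ≤ 2 * n →
      ∃! p : V × Bool, (if p.2 then t2 p.1 else t1 p.1) = i)
    (hbot : ∀ i, 1 ≤ i → i ≤ 2 * n →
      ∃! p : V × Bool, (if p.2 then b2 p.1 else b1 p.1) = i)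
    (htb : ∀ x, 1 ≤ t1 x ∧ t2 x ≤ 2 * n)
    (hbb : ∀ x, 1 ≤ b1 x ∧ b2 x ≤ 2 * n)
    (hsemi : ∀ u v, G.Adj u v →
      ¬(t2 u < t1 v ∧ b2 u < b1 v) ∧ ¬(t2 v < t1 u ∧ b2 v < b1 u))
    (hcov_t : ∀ v : V, ∀ i, t1 v ≤ i → i ≤ t2 v →
      ∃ w : V, (w = v ∨ G.Adj v w) ∧ (t1 w = i ∨ t2 w = i))
    (hcov_b : ∀ v : V, ∀ i, b1 v ≤ i → i ≤ b2 v →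
      ∃ w : V, (w = v ∨ G.Adj v w) ∧ (b1 w = i ∨ b2 w = i))
    (hf : ∀ v : V,
      {i : ℕ | i < t1 v ∧ ∃ w : V, w ≠ v ∧ ¬ G.Adj v w ∧ (t1 w = i ∨ t2 w = i)}.ncard =
      {i : ℕ | i < b1 v ∧ ∃ w : V, w ≠ v ∧ ¬ G.Adj v w ∧ (b1 w = i ∨ b2 w = i)}.ncard) :
    ∀ u v : V, u ≠ v → ¬ G.Adj u v →
      (t2 u < t1 v ∧ b2 u < b1 v) ∨ (t2 v < t1 u ∧ b2 v < b1 u) := by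
  classical
  -- injectivity of the top endpoint map
  have inj_t : ∀ p q : V × Bool,
      (if p.2 then t2 p.1 else t1 p.1) = (if q.2 then t2 q.1 else t1 q.1) → p = q := by
    intro p q h
    have hval : ∀ r : V × Bool,
        1 ≤ (if r.2 then t2 r.1 else t1 r.1) ∧ (if r.2 then t2 r.1 else t1 r.1) ≤ 2 * n := by
      rintro ⟨x, b⟩
      have h1 := (htb x).1; have h2 := (htb x).2; have h3 := ht x
      cases b <;> simp <;> omega
    obtain ⟨r, _, hr⟩ := htop _ (hval p).1 (hval p).2
    have hp := hr p rfl
    have hq := hr q h.symm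
    rw [hp, hq]
  have inj_b : ∀ p q : V × Bool,
      (if p.2 then b2 p.1 else b1 p.1) = (if q.2 then b2 q.1 else b1 q.1) → p = q := by
    intro p q h
    have hval : ∀ r : V × Bool,
        1 ≤ (if r.2 then b2 r.1 else b1 r.1) ∧ (if r.2 then b2 r.1 else b1 r.1) ≤ 2 * n := by
      rintro ⟨x, b⟩
      have h1 := (hbb x).1; have h2 := (hbb x).2; have h3 := hb x
      cases b <;> simp <;> omega
    obtain ⟨r, _, hr⟩ := hbot _ (hval p).1 (hval p).2
    have hp := hr p rfl
    have hq := hr q h.symm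
    rw [hp, hq]
  -- endpoints of a non-neighbor u avoid the interval of v (top)
  have out_t : ∀ u v : V, u ≠ v → ¬ G.Adj u v → ∀ i, (t1 u = i ∨ t2 u = i) →
      ¬ (t1 v ≤ i ∧ i ≤ t2 v) := by
    intro u v hne hadj i hep ⟨h1, h2⟩
    obtain ⟨w, hw, hwep⟩ := hcov_t v i h1 h2
    have hwu : w = u := by
      rcases hwep with h | h <;> rcases hep with h' | h'
      · exact congrArg Prod.fst (inj_t (w, false) (u, false) (by simpa using h.trans h'.symm))
      · exact congrArg Prod.fst (inj_t (w, false) (u, true) (by simpa using h.trans h'.symm))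
      · exact congrArg Prod.fst (inj_t (w, true) (u, false) (by simpa using h.trans h'.symm))
      · exact congrArg Prod.fst (inj_t (w, true) (u, true) (by simpa using h.trans h'.symm))
    subst hwu
    rcases hw with h | h
    · exact hne h
    · exact hadj h.symm
  have out_b : ∀ u v : V, u ≠ v → ¬ G.Adj u v → ∀ i, (b1 u = i ∨ b2 u = i) →
      ¬ (b1 v ≤ i ∧ i ≤ b2 v) := by
    intro u v hne hadj i hep ⟨h1, h2⟩
    obtain ⟨w, hw, hwep⟩ := hcov_b v i h1 h2
    have hwu : w = u := by
      rcases hwep with h | h <;> rcases hep with h' | h'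
      · exact congrArg Prod.fst (inj_b (w, false) (u, false) (by simpa using h.trans h'.symm))
      · exact congrArg Prod.fst (inj_b (w, false) (u, true) (by simpa using h.trans h'.symm))
      · exact congrArg Prod.fst (inj_b (w, true) (u, false) (by simpa using h.trans h'.symm))
      · exact congrArg Prod.fst (inj_b (w, true) (u, true) (by simpa using h.trans h'.symm))
    subst hwu
    rcases hw with h | h
    · exact hne h
    · exact hadj h.symm
  -- top intervals of non-neighbors are disjoint
  have sep_t : ∀ u v : V, u ≠ v → ¬ G.Adj u v → t2 u < t1 v ∨ t2 v < t1 u := by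
    intro u v hne hadj
    have hne1 : t1 u ≠ t1 v := by
      intro h
      exact hne (congrArg Prod.fst (inj_t (u, false) (v, false) (by simpa using h)))
    have hadj' : ¬ G.Adj v u := fun h => hadj h.symm
    rcases lt_or_gt_of_ne hne1 with hlt | hlt
    · -- t1 u < t1 v, so t1 v must be to the right of t2 u
      have := out_t v u hne.symm hadj' (t1 v) (Or.inl rfl)
      left; omega
    · have := out_t u v hne hadj (t1 u) (Or.inl rfl)
      right; omega
  have sep_b : ∀ u v : V, u ≠ v → ¬ G.Adj u v → b2 u < b1 v ∨ b2 v < b1 u := by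
    intro u v hne hadj
    have hne1 : b1 u ≠ b1 v := by
      intro h
      exact hne (congrArg Prod.fst (inj_b (u, false) (v, false) (by simpa using h)))
    have hadj' : ¬ G.Adj v u := fun h => hadj h.symm
    rcases lt_or_gt_of_ne hne1 with hlt | hlt
    · have := out_b v u hne.symm hadj' (b1 v) (Or.inl rfl)
      left; omega
    · have := out_b u v hne hadj (b1 u) (Or.inl rfl)
      right; omega
  -- the key counting identity: |L_t(v)| = |L_b(v)|
  have hLL : ∀ v : V,
      {w : V | w ≠ v ∧ ¬ G.Adj v w ∧ t2 w < t1 v}.ncard =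
      {w : V | w ≠ v ∧ ¬ G.Adj v w ∧ b2 w < b1 v}.ncard := by
    intro v
    set Lt : Set V := {w : V | w ≠ v ∧ ¬ G.Adj v w ∧ t2 w < t1 v} with hLt
    set Lb : Set V := {w : V | w ≠ v ∧ ¬ G.Adj v w ∧ b2 w < b1 v} with hLb
    have hT : {i : ℕ | i < t1 v ∧ ∃ w : V, w ≠ v ∧ ¬ G.Adj v w ∧ (t1 w = i ∨ t2 w = i)}
        = (t1 '' Lt) ∪ (t2 '' Lt) := by
      ext i
      constructor
      · rintro ⟨hi, w, hwv, hadj, hep⟩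
        have hsep : t2 w < t1 v := by
          rcases sep_t w v hwv (fun h => hadj h.symm) with h | h
          · exact h
          · have h1 := ht w; have h2 := ht v; omega
        rcases hep with h | h
        · exact Or.inl ⟨w, ⟨hwv, hadj, hsep⟩, h⟩
        · exact Or.inr ⟨w, ⟨hwv, hadj, hsep⟩, h⟩
      · rintro (⟨w, ⟨hwv, hadj, hsep⟩, rfl⟩ | ⟨w, ⟨hwv, hadj, hsep⟩, rfl⟩)
        · exact ⟨by have := ht w; omega, w, hwv, hadj, Or.inl rfl⟩
        · exact ⟨hsep, w, hwv, hadj, Or.inr rfl⟩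
    have hB : {i : ℕ | i < b1 v ∧ ∃ w : V, w ≠ v ∧ ¬ G.Adj v w ∧ (b1 w = i ∨ b2 w = i)}
        = (b1 '' Lb) ∪ (b2 '' Lb) := by
      ext i
      constructor
      · rintro ⟨hi, w, hwv, hadj, hep⟩
        have hsep : b2 w < b1 v := by
          rcases sep_b w v hwv (fun h => hadj h.symm) with h | h
          · exact h
          · have h1 := hb w; have h2 := hb v; omega
        rcases hep with h | h
        · exact Or.inl ⟨w, ⟨hwv, hadj, hsep⟩, h⟩
        · exact Or.inr ⟨w, ⟨hwv, hadj, hsep⟩, h⟩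
      · rintro (⟨w, ⟨hwv, hadj, hsep⟩, rfl⟩ | ⟨w, ⟨hwv, hadj, hsep⟩, rfl⟩)
        · exact ⟨by have := hb w; omega, w, hwv, hadj, Or.inl rfl⟩
        · exact ⟨hsep, w, hwv, hadj, Or.inr rfl⟩
    have inj1 : Function.Injective t1 := fun a b h =>
      congrArg Prod.fst (inj_t (a, false) (b, false) (by simpa using h))
    have inj2 : Function.Injective t2 := fun a b h =>
      congrArg Prod.fst (inj_t (a, true) (b, true) (by simpa using h))
    have inj3 : Function.Injective b1 := fun a b h =>
      congrArg Prod.fst (inj_b (a, false) (b, false) (by simpa using h))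
    have inj4 : Function.Injective b2 := fun a b h =>
      congrArg Prod.fst (inj_b (a, true) (b, true) (by simpa using h))
    have hdisjT : Disjoint (t1 '' Lt) (t2 '' Lt) := by
      rw [Set.disjoint_left]
      rintro i ⟨a, _, rfl⟩ ⟨b, _, hba⟩
      have := inj_t (b, true) (a, false) (by simpa using hba)
      simp at this
    have hdisjB : Disjoint (b1 '' Lb) (b2 '' Lb) := by
      rw [Set.disjoint_left]
      rintro i ⟨a, _, rfl⟩ ⟨b, _, hba⟩
      have := inj_b (b, true) (a, false) (by simpa using hba)
      simp at this
    have hcard := hf v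
    rw [hT, hB, Set.ncard_union_eq hdisjT ((Set.toFinite _).image _) ((Set.toFinite _).image _),
      Set.ncard_union_eq hdisjB ((Set.toFinite _).image _) ((Set.toFinite _).image _),
      Set.ncard_image_of_injective _ inj1, Set.ncard_image_of_injective _ inj2,
      Set.ncard_image_of_injective _ inj3, Set.ncard_image_of_injective _ inj4] at hcard
    omega
  -- no "mixed" pair exists
  have key : ∀ u v : V, u ≠ v → ¬ G.Adj u v → t2 u < t1 v → b2 u < b1 v := by
    by_contra hcon
    push_neg at hcon
    obtain ⟨u, v, huv, hadj, htuv, hbuv⟩ := hcon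
    set S : Finset (V × V) := Finset.univ.filter
      (fun p => p.1 ≠ p.2 ∧ ¬ G.Adj p.1 p.2 ∧ t2 p.1 < t1 p.2 ∧ b2 p.2 < b1 p.1) with hS
    have hne : S.Nonempty := by
      refine ⟨(u, v), ?_⟩
      simp only [hS, Finset.mem_filter, Finset.mem_univ, true_and]
      refine ⟨huv, hadj, htuv, ?_⟩
      rcases sep_b u v huv hadj with h | h
      · omega
      · exact h
    obtain ⟨p, hpS, hmax⟩ := S.exists_max_image (fun p => t1 p.2) hne
    simp only [hS, Finset.mem_filter, Finset.mem_univ, true_and] at hpS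
    obtain ⟨hp1, hp2, hp3, hp4⟩ := hpS
    set u0 := p.1
    set v0 := p.2
    set Lt : Set V := {w : V | w ≠ v0 ∧ ¬ G.Adj v0 w ∧ t2 w < t1 v0} with hLt
    set Lb : Set V := {w : V | w ≠ v0 ∧ ¬ G.Adj v0 w ∧ b2 w < b1 v0} with hLb
    have hu0t : u0 ∈ Lt := ⟨hp1, fun h => hp2 h.symm, hp3⟩
    have hu0b : u0 ∉ Lb := by
      rintro ⟨_, _, h⟩
      have := hb u0; have := hb v0; omega
    have hnotsub : ¬ (Lb ⊆ Lt) := by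
      intro hsub
      have hss : Lb ⊂ Lt := ⟨hsub, fun h => hu0b (h hu0t)⟩
      have h1 := Set.ncard_lt_ncard hss (Set.toFinite _)
      have h2 : Lt.ncard = Lb.ncard := hLL v0
      omega
    obtain ⟨u', hu'b, hu't⟩ := Set.not_subset.mp hnotsub
    obtain ⟨hu'1, hu'2, hu'3⟩ := hu'b
    have hnt : ¬ t2 u' < t1 v0 := fun h => hu't ⟨hu'1, hu'2, h⟩
    have hsep : t2 v0 < t1 u' := by
      rcases sep_t u' v0 hu'1 (fun h => hu'2 h.symm) with h | h
      · exact absurd h hnt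
      · exact h
    have hmem : (v0, u') ∈ S := by
      simp only [hS, Finset.mem_filter, Finset.mem_univ, true_and]
      exact ⟨hu'1.symm, hu'2, hsep, hu'3⟩
    have hm : t1 u' ≤ t1 v0 := hmax (v0, u') hmem
    have := ht v0
    omega
  intro u v hne hadj
  rcases sep_t u v hne hadj with h | h
  · exact Or.inl ⟨h, key u v hne hadj h⟩
  · exact Or.inr ⟨h, key v u hne.symm (fun h' => hadj h'.symm) h⟩
end

section
/- A graph G on n vertices admits a consecutive trapezoid model if and only if G is a permutation graph. Here a consecutive trapezoid model is a proper trapezoid model {(t_1(v), t_2(v), b_1(v), b_2(v))}_{v∈V} with t_2(v) = t_1(v)+1 and b_2(v) = b_1(v)+1 for every v, and a permutation graph is one admitting bijections ℓ_1, ℓ_2 : V → [n] with u v ∈ E iff (ℓ_1(v) − ℓ_1(u))(ℓ_2(v) − ℓ_2(u)) < 0. -/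
private lemma stmt8_key (a b c d : ℕ) :
    ((b : ℤ) - a) * ((d : ℤ) - c) < 0 ↔ (a < b ∧ d < c) ∨ (b < a ∧ c < d) := by
  rw [mul_neg_iff]
  simp [sub_pos, sub_neg, Nat.cast_lt]

private lemma stmt8_rank {V : Type*} [Fintype V] {n : ℕ} (hn : Fintype.card V = n)
    {f : V → ℕ} (hf : Function.Injective f) :
    ∃ e : V ≃ Fin n, ∀ x y, (e x).val < (e y).val ↔ f x < f y := by
  set s := Finset.univ.image f with hsdef
  have hs : s.card = n := by
    rw [hsdef, Finset.card_image_of_injective _ hf, Finset.card_univ, hn]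
  have hg : Function.Bijective
      (fun x : V => (⟨f x, Finset.mem_image_of_mem f (Finset.mem_univ x)⟩ : s)) := by
    rw [Fintype.bijective_iff_injective_and_card]
    refine ⟨fun x y hxy => hf (congrArg Subtype.val hxy), ?_⟩
    rw [Fintype.card_coe, hs, hn]
  refine ⟨(Equiv.ofBijective _ hg).trans (s.orderIsoOfFin hs).symm.toEquiv, fun x y => ?_⟩
  show ((s.orderIsoOfFin hs).symm _ : Fin n) < (s.orderIsoOfFin hs).symm _ ↔ _
  rw [OrderIso.lt_iff_lt]
  exact Subtype.mk_lt_mk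

private lemma stmt8_cover {V : Type*} [Fintype V] {n : ℕ} (l : V ≃ Fin n)
    (i : ℕ) (h1 : 1 ≤ i) (h2 : i ≤ 2 * n) :
    ∃! p : V × Bool, (if p.2 then 2 * (l p.1).val + 2 else 2 * (l p.1).val + 1) = i := by
  rcases Nat.even_or_odd i with ⟨k, hk⟩ | ⟨k, hk⟩
  · have hkn : k - 1 < n := by omega
    refine ⟨(l.symm ⟨k - 1, hkn⟩, true), by simp; omega, ?_⟩
    rintro ⟨y, b⟩ hy
    cases b
    · simp only [if_neg Bool.false_ne_true, Bool.false_eq_true, if_false] at hy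
      omega
    · simp only [if_true] at hy
      have hly : l y = ⟨k - 1, hkn⟩ := Fin.ext (by simpa using by omega)
      simp only [Prod.mk.injEq, and_true]
      exact l.eq_symm_apply.mpr hly
  · have hkn : k < n := by omega
    refine ⟨(l.symm ⟨k, hkn⟩, false), by simp; omega, ?_⟩
    rintro ⟨y, b⟩ hy
    cases b
    · simp only [Bool.false_eq_true, if_false] at hy
      have hly : l y = ⟨k, hkn⟩ := Fin.ext (by simpa using by omega)
      simp only [Prod.mk.injEq, and_true]
      exact l.eq_symm_apply.mpr hly
    · simp only [if_true] at hy
      omega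

/-- a graph admits a consecutive (proper) trapezoid model iff it
is a permutation graph. -/
theorem stmt8 {V : Type*} [Fintype V] {n : ℕ} (hn : Fintype.card V = n)
    (G : SimpleGraph V) :
    (∃ t1 t2 b1 b2 : V → ℕ,
      (∀ x, t1 x < t2 x) ∧ (∀ x, b1 x < b2 x) ∧
      (∀ x, t2 x = t1 x + 1) ∧ (∀ x, b2 x = b1 x + 1) ∧
      (∀ i, 1 ≤ i → i ≤ 2 * n →
        ∃! p : V × Bool, (if p.2 then t2 p.1 else t1 p.1) = i) ∧
      (∀ i, 1 ≤ i → i ≤ 2 * n →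
        ∃! p : V × Bool, (if p.2 then b2 p.1 else b1 p.1) = i) ∧
      (∀ x, 1 ≤ t1 x ∧ t2 x ≤ 2 * n) ∧ (∀ x, 1 ≤ b1 x ∧ b2 x ≤ 2 * n) ∧
      (∀ u v, u ≠ v → (G.Adj u v ↔
        ¬(t2 u < t1 v ∧ b2 u < b1 v) ∧ ¬(t2 v < t1 u ∧ b2 v < b1 u)))) ↔
    (∃ l1 l2 : V ≃ Fin n, ∀ u v : V, G.Adj u v ↔
      (((l1 v).val : ℤ) - ((l1 u).val : ℤ)) * (((l2 v).val : ℤ) - ((l2 u).val : ℤ)) < 0) := by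
  constructor
  · rintro ⟨t1, t2, b1, b2, ht, hb, ht2, hb2, hTcov, hBcov, hTbd, hBbd, hadj⟩
    -- injectivity of t1 and b1
    have ht1inj : Function.Injective t1 := by
      intro x y hxy
      obtain ⟨p, hp, hu⟩ := hTcov (t1 x) (hTbd x).1
        (by have := (hTbd x).2; have := ht2 x; omega)
      have e1 := hu (x, false) (by simp)
      have e2 := hu (y, false) (by simp [hxy.symm])
      exact congrArg Prod.fst (e1.trans e2.symm)
    have hb1inj : Function.Injective b1 := by
      intro x y hxy
      obtain ⟨p, hp, hu⟩ := hBcov (b1 x) (hBbd x).1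
        (by have := (hBbd x).2; have := hb2 x; omega)
      have e1 := hu (x, false) (by simp)
      have e2 := hu (y, false) (by simp [hxy.symm])
      exact congrArg Prod.fst (e1.trans e2.symm)
    have hT12 : ∀ x y, t2 x ≠ t1 y := by
      intro x y h
      obtain ⟨p, hp, hu⟩ := hTcov (t2 x)
        (by have := (hTbd x).1; have := ht2 x; omega) (hTbd x).2
      have e1 := hu (x, true) (by simp)
      have e2 := hu (y, false) (by simp [h.symm])
      simpa using congrArg Prod.snd (e1.trans e2.symm)
    have hB12 : ∀ x y, b2 x ≠ b1 y := by
      intro x y h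
      obtain ⟨p, hp, hu⟩ := hBcov (b2 x)
        (by have := (hBbd x).1; have := hb2 x; omega) (hBbd x).2
      have e1 := hu (x, true) (by simp)
      have e2 := hu (y, false) (by simp [h.symm])
      simpa using congrArg Prod.snd (e1.trans e2.symm)
    obtain ⟨e1, he1⟩ := stmt8_rank hn ht1inj
    obtain ⟨e2, he2⟩ := stmt8_rank hn hb1inj
    refine ⟨e1, e2, fun u v => ?_⟩
    by_cases huv : u = v
    · subst huv; simp
    · rw [hadj u v huv, stmt8_key]
      simp only [he1, he2]
      have h1 := ht2 u; have h2 := ht2 v; have h3 := hb2 u; have h4 := hb2 v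
      have h5 := hT12 u v; have h6 := hT12 v u
      have h7 := hB12 u v; have h8 := hB12 v u
      have h9 : t1 u ≠ t1 v := fun h => huv (ht1inj h)
      have h10 : b1 u ≠ b1 v := fun h => huv (hb1inj h)
      omega
  · rintro ⟨l1, l2, hadj⟩
    refine ⟨fun x => 2 * (l1 x).val + 1, fun x => 2 * (l1 x).val + 2,
      fun x => 2 * (l2 x).val + 1, fun x => 2 * (l2 x).val + 2,
      fun x => Nat.lt_succ_self _, fun x => Nat.lt_succ_self _, fun x => rfl, fun x => rfl,
      fun i h1 h2 => stmt8_cover l1 i h1 h2, fun i h1 h2 => stmt8_cover l2 i h1 h2,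
      fun x => ⟨Nat.le_add_left 1 _, by have := (l1 x).isLt; show 2 * (l1 x).val + 2 ≤ 2 * n; omega⟩,
      fun x => ⟨Nat.le_add_left 1 _, by have := (l2 x).isLt; show 2 * (l2 x).val + 2 ≤ 2 * n; omega⟩,
      fun u v huv => ?_⟩
    rw [hadj u v, stmt8_key]
    dsimp only
    have h1 : (l1 u).val ≠ (l1 v).val := fun h => huv (l1.injective (Fin.ext h))
    have h2 : (l2 u).val ≠ (l2 v).val := fun h => huv (l2.injective (Fin.ext h))
    omega
end

section
/- Let Q_n be the graph on vertices v_1, …, v_{5n} consisting of the path v_1 v_2 ⋯ v_{5n} together with the chord edges {v_{5i−3}, v_{5i−1}} for each i ∈ [n]. Then Q_n is a permutation graph, i.e., there exist bijections ℓ_1, ℓ_2 : V(Q_n) → [5n] such that two vertices u, w are adjacent iff (ℓ_1(u) − ℓ_1(w))(ℓ_2(u) − ℓ_2(w)) < 0. -/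
/-- The graph Q_n: a path on 5n vertices (0-indexed: vertex k stands for
v_{k+1}) together with the chords {v_{5i-3}, v_{5i-1}} for i ∈ [n], i.e.
0-indexed edges {5k+1, 5k+3}. -/
def Qgraph (n : ℕ) : SimpleGraph (Fin (5 * n)) :=
  SimpleGraph.fromRel (fun a b =>
    (b : ℕ) = (a : ℕ) + 1 ∨ ((b : ℕ) = (a : ℕ) + 2 ∧ (a : ℕ) % 5 = 1))

def fnat (k : ℕ) : ℕ :=
  if k % 5 = 0 then k + 1 else if k % 5 = 1 then k - 1
  else if k % 5 = 3 then k + 1 else if k % 5 = 4 then k - 1 else k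

def gnat (n k : ℕ) : ℕ :=
  if k % 5 = 1 then k + 2 else if k % 5 = 3 then k - 2
  else if k % 5 = 4 ∧ k + 1 < 5 * n then k + 1
  else if k % 5 = 0 ∧ 0 < k then k - 1 else k

lemma fnat_lt {n k : ℕ} (hk : k < 5 * n) : fnat k < 5 * n := by
  unfold fnat; split_ifs <;> omega

lemma gnat_lt {n k : ℕ} (hk : k < 5 * n) : gnat n k < 5 * n := by
  unfold gnat; split_ifs <;> omega

lemma fnat_invol (k : ℕ) : fnat (fnat k) = k := by
  unfold fnat; split_ifs <;> omega

lemma gnat_invol {n k : ℕ} (hk : k < 5 * n) : gnat n (gnat n k) = k := by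
  unfold gnat; split_ifs <;> omega

def fFin (n : ℕ) : Fin (5 * n) → Fin (5 * n) := fun k => ⟨fnat k.val, fnat_lt k.isLt⟩

def gFin (n : ℕ) : Fin (5 * n) → Fin (5 * n) := fun k => ⟨gnat n k.val, gnat_lt k.isLt⟩

def fEquiv (n : ℕ) : Fin (5 * n) ≃ Fin (5 * n) :=
  ⟨fFin n, fFin n, fun k => Fin.ext (fnat_invol k.val), fun k => Fin.ext (fnat_invol k.val)⟩

def gEquiv (n : ℕ) : Fin (5 * n) ≃ Fin (5 * n) :=
  ⟨gFin n, gFin n, fun k => Fin.ext (gnat_invol k.isLt), fun k => Fin.ext (gnat_invol k.isLt)⟩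

set_option maxHeartbeats 2000000 in
lemma key (n a b : ℕ) (ha : a < 5 * n) (hb : b < 5 * n) :
    (a ≠ b ∧ ((b = a + 1 ∨ (b = a + 2 ∧ a % 5 = 1)) ∨ (a = b + 1 ∨ (a = b + 2 ∧ b % 5 = 1))))
    ↔ ((fnat a : ℤ) - (fnat b : ℤ)) * ((gnat n a : ℤ) - (gnat n b : ℤ)) < 0 := by
  rw [mul_neg_iff]
  unfold fnat gnat
  split_ifs <;> omega

/-- Q_n is a permutation graph. -/
theorem stmt10 (n : ℕ) (hn : 1 ≤ n) :
    ∃ l1 l2 : Fin (5 * n) ≃ Fin (5 * n),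
      ∀ u w : Fin (5 * n), (Qgraph n).Adj u w ↔
        (((l1 u).val : ℤ) - ((l1 w).val : ℤ)) * (((l2 u).val : ℤ) - ((l2 w).val : ℤ)) < 0 := by
  refine ⟨fEquiv n, gEquiv n, fun u w => ?_⟩
  have h := key n u.val w.val u.isLt w.isLt
  rw [Qgraph, SimpleGraph.fromRel_adj]
  constructor
  · rintro ⟨hne, h2⟩
    exact h.mp ⟨fun e => hne (Fin.ext e), h2⟩
  · intro hlt
    obtain ⟨hne, h2⟩ := h.mpr hlt
    exact ⟨fun e => hne (congrArg Fin.val e), h2⟩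
end

section
/- Every proper circular-arc graph whose arcs can be ordered by right endpoints has a Hamiltonian-like consecutive adjacency structure: if G is connected and the vertices are ordered v_1, …, v_n by the counterclockwise order of the right endpoints of arcs in a proper circular-arc representation covering the whole circle, then for each 1 ≤ i < n, v_i is adjacent to v_{i+1}. -/
lemma mem_arc_iff {a b x : ℝ} (ha : 0 ≤ a) (hb : b < 2)
    (hx0 : 0 ≤ x) (hx1 : x < 1) :
    ((x : ℝ) : AddCircle (1:ℝ)) ∈ (fun t : ℝ => (t : AddCircle (1:ℝ))) '' Set.Icc a b ↔
      (a ≤ x ∧ x ≤ b) ∨ (a ≤ x + 1 ∧ x + 1 ≤ b) := by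
  constructor
  · rintro ⟨y, ⟨hy1, hy2⟩, hy⟩
    have hy' : ∃ k : ℤ, x - y = k := by
      rw [QuotientAddGroup.eq, AddSubgroup.mem_zmultiples_iff] at hy
      obtain ⟨k, hk⟩ := hy
      rw [zsmul_eq_mul, mul_one] at hk
      exact ⟨k, by linarith⟩
    obtain ⟨k, hk⟩ := hy'
    have h1' : k < 1 := by exact_mod_cast show (k:ℝ) < 1 by linarith
    have h2' : -2 < k := by exact_mod_cast show (-2:ℝ) < (k:ℝ) by linarith
    interval_cases k
    · right; push_cast at hk; exact ⟨by linarith, by linarith⟩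
    · left; push_cast at hk; exact ⟨by linarith, by linarith⟩
  · rintro (⟨h1, h2⟩ | ⟨h1, h2⟩)
    · exact ⟨x, ⟨h1, h2⟩, rfl⟩
    · exact ⟨x + 1, ⟨h1, h2⟩, by simp [AddCircle.coe_add_period]⟩

/-- in a connected proper circular-arc graph whose arcs cover
the whole circle, consecutive vertices in the order of right endpoints are
adjacent. The circle is `AddCircle (1:ℝ)`; the arc of v runs counterclockwise
from s v to e v (wrapping once if e v < s v). -/
theorem stmt18 {V : Type*} {n : ℕ} (hn : 2 ≤ n)
    (G : SimpleGraph V) (hG : G.Connected) (σ : Fin n ≃ V)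
    (s e : V → ℝ)
    (hs : ∀ v, 0 ≤ s v ∧ s v < 1) (he : ∀ v, 0 ≤ e v ∧ e v < 1)
    (arc : V → Set (AddCircle (1 : ℝ)))
    (harc : ∀ v, arc v = (fun x : ℝ => (x : AddCircle (1 : ℝ))) ''
      Set.Icc (s v) (if s v ≤ e v then e v else e v + 1))
    (hproper : ∀ u v : V, u ≠ v → ¬ arc u ⊆ arc v)
    (hcover : (⋃ v, arc v) = Set.univ)
    (hadj : ∀ u v : V, u ≠ v → (G.Adj u v ↔ (arc u ∩ arc v).Nonempty))
    (horder : StrictMono fun i : Fin n => e (σ i)) :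
    ∀ i : Fin n, ∀ h : (i : ℕ) + 1 < n, G.Adj (σ i) (σ ⟨(i : ℕ) + 1, h⟩) := by
  intro i hlt
  set u := σ i with hu
  set w := σ ⟨(i : ℕ) + 1, hlt⟩ with hw
  have hne : u ≠ w := by
    intro h
    have := congrArg Fin.val (σ.injective h)
    simp at this
  have heuw : e u < e w := horder (by simp [Fin.lt_def])
  have hB2 : ∀ v : V, (if s v ≤ e v then e v else e v + 1) < 2 := by
    intro v; split_ifs <;> linarith [(he v).2]
  have hchar : ∀ (v : V) (x : ℝ), 0 ≤ x → x < 1 →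
      (((x : ℝ) : AddCircle (1:ℝ)) ∈ arc v ↔
        ((s v ≤ x ∧ x ≤ (if s v ≤ e v then e v else e v + 1)) ∨
         (s v ≤ x + 1 ∧ x + 1 ≤ (if s v ≤ e v then e v else e v + 1)))) := by
    intro v x hx0 hx1
    rw [harc v]
    exact mem_arc_iff (hs v).1 (hB2 v) hx0 hx1
  have hmem_e : ∀ v : V, ((e v : ℝ) : AddCircle (1:ℝ)) ∈ arc v := by
    intro v
    rw [hchar v (e v) (he v).1 (he v).2]
    split_ifs with h
    · exact Or.inl ⟨h, le_refl _⟩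
    · exact Or.inr ⟨by linarith [(hs v).2, (he v).1], by linarith⟩
  rw [hadj u w hne]
  by_cases hww : s w ≤ e w
  swap
  · -- w wraps; e u lies in the tail [0, e w] of arc w
    refine ⟨((e u : ℝ) : AddCircle (1:ℝ)), hmem_e u, ?_⟩
    rw [hchar w (e u) (he u).1 (he u).2, if_neg hww]
    exact Or.inr ⟨by linarith [(hs w).2, (he u).1], by linarith⟩
  by_cases hsw : s w ≤ e u
  · refine ⟨((e u : ℝ) : AddCircle (1:ℝ)), hmem_e u, ?_⟩
    rw [hchar w (e u) (he u).1 (he u).2, if_pos hww]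
    exact Or.inl ⟨hsw, le_of_lt heuw⟩
  push_neg at hsw
  -- now e u < s w ≤ e w; pick q strictly between e u and s w
  set q : ℝ := (e u + s w) / 2 with hqdef
  have hq1 : e u < q := by rw [hqdef]; linarith
  have hq2 : q < s w := by rw [hqdef]; linarith
  have hq0 : 0 ≤ q := le_trans (he u).1 (le_of_lt hq1)
  have hqlt : q < 1 := lt_trans hq2 (hs w).2
  have hcov : ((q : ℝ) : AddCircle (1:ℝ)) ∈ ⋃ v, arc v := by rw [hcover]; trivial
  obtain ⟨x, hx⟩ := Set.mem_iUnion.mp hcov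
  rw [hchar x q hq0 hqlt] at hx
  have hsucc : ∀ v : V, e u < e v → e w ≤ e v := by
    intro v hv
    obtain ⟨k, rfl⟩ := σ.surjective v
    have hik : i < k := by
      have := (horder.lt_iff_lt (a := i) (b := k)).mp hv
      exact this
    have hk : (⟨(i : ℕ) + 1, hlt⟩ : Fin n) ≤ k := by
      rw [Fin.le_def]
      rw [Fin.lt_def] at hik
      exact hik
    exact horder.monotone hk
  have hsubset : (∀ y : ℝ, s w ≤ y → y ≤ e w →
      ((y : ℝ) : AddCircle (1:ℝ)) ∈ arc x) → arc w ⊆ arc x := by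
    intro P p hp
    rw [harc w, if_pos hww] at hp
    obtain ⟨y, ⟨hy1, hy2⟩, rfl⟩ := hp
    exact P y hy1 hy2
  by_cases hxx : s x ≤ e x
  · rw [if_pos hxx] at hx
    have hx' : s x ≤ q ∧ q ≤ e x := by
      rcases hx with h | h
      · exact h
      · exfalso; linarith [h.2, (he x).2]
    have hxu : x ≠ u := by
      intro h; rw [h] at hx'; linarith [hx'.2]
    have hxw : w ≠ x := by
      intro h; rw [← h] at hx'; linarith [hx'.1]
    have hex : e w ≤ e x := hsucc x (lt_of_lt_of_le hq1 hx'.2)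
    exact absurd (hsubset fun y hy1 hy2 => by
      rw [hchar x y (le_trans (hs w).1 hy1) (lt_of_le_of_lt hy2 (he w).2), if_pos hxx]
      exact Or.inl ⟨by linarith [hx'.1], by linarith⟩) (hproper w x hxw)
  · rw [if_neg hxx] at hx
    push_neg at hxx
    have hxw : w ≠ x := by
      intro h; rw [← h] at hxx; linarith
    rcases hx with h | h
    · -- s x ≤ q : arc x starts before q and wraps
      by_cases hxu : x = u
      · -- u wraps and contains e w
        refine ⟨((e w : ℝ) : AddCircle (1:ℝ)), ?_, hmem_e w⟩
        rw [← hxu, hchar x (e w) (he w).1 (he w).2, if_neg (not_le.mpr hxx)]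
        exact Or.inl ⟨by linarith [h.1], by linarith [(he w).2, (he x).1]⟩
      · exact absurd (hsubset fun y hy1 hy2 => by
          rw [hchar x y (le_trans (hs w).1 hy1) (lt_of_le_of_lt hy2 (he w).2),
            if_neg (not_le.mpr hxx)]
          exact Or.inl ⟨by linarith [h.1], by linarith [(he w).2, (he x).1]⟩)
          (hproper w x hxw)
    · -- q + 1 ≤ e x + 1, i.e. q ≤ e x
      have hqex : q ≤ e x := by linarith [h.2]
      have hex : e w ≤ e x := hsucc x (lt_of_lt_of_le hq1 hqex)
      exact absurd (hsubset fun y hy1 hy2 => by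
        rw [hchar x y (le_trans (hs w).1 hy1) (lt_of_le_of_lt hy2 (he w).2),
          if_neg (not_le.mpr hxx)]
        exact Or.inr ⟨by linarith [(hs x).2, (hs w).1], by linarith⟩)
        (hproper w x hxw)
end
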